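/- arXiv:1102.4868 — 4 statements merged into one kernel-verified Lean document; each statement's English description precedes it below -/
import Mathlib

section
/- Define ω_◇(Q,s) = min{ ‖Qz‖_◇ / ‖z‖_∞ : z ≠ 0, ‖z‖₁/‖z‖_∞ ≤ s }. If x is k-sparse, ‖w‖₂ ≤ ε, and x̂ solves Basis Pursuit (minimizing ‖z‖₁ subject to ‖y − Az‖₂ ≤ ε with y = Ax + w), then ‖x̂ − x‖_∞ ≤ 2ε/ω₂(A,2k), provided ω₂(A,2k) > 0. -/
open Finset Matrix

/-- ℓ₁ norm of a vector. -/
noncomputable def l1 {n : ℕ} (x : Fin n → ℝ) : ℝ := ∑ i, |x i|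

/-- ℓ∞ (sup) norm of a vector. -/
noncomputable def linf {n : ℕ} (x : Fin n → ℝ) : ℝ := ⨆ i, |x i|

/-- ℓ₂ (Euclidean) norm of a vector. -/
noncomputable def l2 {n : ℕ} (x : Fin n → ℝ) : ℝ := Real.sqrt (∑ i, (x i) ^ 2)

/-- ω₂(A,s) = inf{ ‖Az‖₂/‖z‖_∞ : z ≠ 0, ‖z‖₁ ≤ s‖z‖_∞ }. -/
noncomputable def omega2 {m n : ℕ} (A : Matrix (Fin m) (Fin n) ℝ) (s : ℝ) : ℝ :=
  sInf {r | ∃ z : Fin n → ℝ, z ≠ 0 ∧ l1 z ≤ s * linf z ∧ r = l2 (A.mulVec z) / linf z}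

/-!
The error `h = x̂ - x` lies in the cone `‖h‖₁ ≤ 2k ‖h‖_∞`: `x` is feasible, so
`‖x̂‖₁ ≤ ‖x‖₁`, which forces the mass of `h` off the support `S` of `x` to be at most its mass
on `S`, hence `‖h‖₁ ≤ 2 ∑_{i ∈ S} |h i| ≤ 2k ‖h‖_∞`. Both `x` and `x̂` are feasible, so
`‖A h‖₂ ≤ 2ε`, and the definition of `ω₂(A, 2k)` as an infimum over that cone gives
`ω₂(A, 2k) ‖h‖_∞ ≤ ‖A h‖₂ ≤ 2ε`.
-/

section Norms

variable {n : ℕ}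

lemma l2_nonneg (x : Fin n → ℝ) : 0 ≤ l2 x := Real.sqrt_nonneg _

lemma l2_eq_norm_toLp (x : Fin n → ℝ) : l2 x = ‖WithLp.toLp 2 x‖ := by
  simp [EuclideanSpace.norm_eq, l2, sq_abs]

lemma l2_sub_le (a b : Fin n → ℝ) : l2 (a - b) ≤ l2 a + l2 b := by
  simpa only [l2_eq_norm_toLp, WithLp.toLp_sub] using norm_sub_le _ _

lemma abs_le_linf (x : Fin n → ℝ) (i : Fin n) : |x i| ≤ linf x :=
  le_ciSup (f := fun i => |x i|) (Set.finite_range _).bddAbove i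

lemma linf_nonneg (x : Fin n → ℝ) : 0 ≤ linf x :=
  Real.iSup_nonneg fun i => abs_nonneg (x i)

lemma linf_pos {x : Fin n → ℝ} (hx : x ≠ 0) : 0 < linf x := by
  obtain ⟨i, hi⟩ := Function.ne_iff.mp hx
  exact (abs_pos.mpr hi).trans_le (abs_le_linf x i)

lemma sum_abs_le_card_mul_linf (x : Fin n → ℝ) (S : Finset (Fin n)) :
    ∑ i ∈ S, |x i| ≤ #S * linf x := by
  simpa using Finset.sum_le_sum fun i (_ : i ∈ S) => abs_le_linf x i

end Norms

section Cone

variable {n : ℕ} {x xhat : Fin n → ℝ} {S : Finset (Fin n)}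

lemma sum_compl_abs_sub_le_sum_abs_sub (hS : ∀ i ∉ S, x i = 0) (hl1 : l1 xhat ≤ l1 x) :
    ∑ i ∈ Sᶜ, |xhat i - x i| ≤ ∑ i ∈ S, |xhat i - x i| := by
  have hx : l1 x = ∑ i ∈ S, |x i| :=
    (Finset.sum_subset (subset_univ S) fun i _ hi => by simp [hS i hi]).symm
  have hxhat : l1 xhat = ∑ i ∈ S, |xhat i| + ∑ i ∈ Sᶜ, |xhat i - x i| := by
    rw [l1, ← Finset.sum_add_sum_compl S]
    congr 1
    exact Finset.sum_congr rfl fun i hi => by rw [hS i (Finset.mem_compl.mp hi), sub_zero]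
  have hS_le : ∑ i ∈ S, |x i| ≤ ∑ i ∈ S, |xhat i| + ∑ i ∈ S, |xhat i - x i| := by
    rw [← Finset.sum_add_distrib]
    exact Finset.sum_le_sum fun i _ => by
      linarith [abs_sub_abs_le_abs_sub (x i) (xhat i), abs_sub_comm (x i) (xhat i)]
  linarith

lemma l1_sub_le_two_mul_card_mul_linf (hS : ∀ i ∉ S, x i = 0) (hl1 : l1 xhat ≤ l1 x) :
    l1 (xhat - x) ≤ 2 * #S * linf (xhat - x) := by
  have hsplit : l1 (xhat - x) = ∑ i ∈ S, |xhat i - x i| + ∑ i ∈ Sᶜ, |xhat i - x i| :=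
    (Finset.sum_add_sum_compl S _).symm
  have hS_le := sum_abs_le_card_mul_linf (xhat - x) S
  simp only [Pi.sub_apply] at hS_le
  linarith [sum_compl_abs_sub_le_sum_abs_sub hS hl1]

end Cone

lemma omega2_mul_linf_le {m n : ℕ} (A : Matrix (Fin m) (Fin n) ℝ) {s : ℝ} {z : Fin n → ℝ}
    (hz : l1 z ≤ s * linf z) : omega2 A s * linf z ≤ l2 (A *ᵥ z) := by
  rcases eq_or_ne z 0 with rfl | hz0
  · simpa [linf] using l2_nonneg _
  have hbdd : BddBelow {r | ∃ z : Fin n → ℝ, z ≠ 0 ∧ l1 z ≤ s * linf z ∧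
      r = l2 (A *ᵥ z) / linf z} := by
    refine ⟨0, ?_⟩
    rintro _ ⟨z, hz0, -, rfl⟩
    exact div_nonneg (l2_nonneg _) (linf_nonneg z)
  rw [← le_div_iff₀ (linf_pos hz0)]
  exact csInf_le hbdd ⟨z, hz0, hz, rfl⟩

theorem stmt10 {m n : ℕ} (A : Matrix (Fin m) (Fin n) ℝ) (k : ℕ)
    (x xhat : Fin n → ℝ) (w y : Fin m → ℝ) (ε : ℝ)
    (hx : (Finset.univ.filter fun i => x i ≠ 0).card ≤ k)
    (hy : y = A.mulVec x + w) (hw : l2 w ≤ ε)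
    (hfeas : l2 (y - A.mulVec xhat) ≤ ε)
    (hopt : ∀ z : Fin n → ℝ, l2 (y - A.mulVec z) ≤ ε → l1 xhat ≤ l1 z)
    (hω : 0 < omega2 A (2 * k)) :
    linf (fun i => xhat i - x i) ≤ 2 * ε / omega2 A (2 * k) := by
  have hl1 : l1 xhat ≤ l1 x := hopt x (by simpa [hy] using hw)
  have hcone : l1 (xhat - x) ≤ 2 * k * linf (xhat - x) := by
    refine (l1_sub_le_two_mul_card_mul_linf (S := univ.filter fun i => x i ≠ 0)
      (fun i hi => by simpa using hi) hl1).trans ?_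
    gcongr
    exact linf_nonneg _
  have hres : l2 (A *ᵥ (xhat - x)) ≤ 2 * ε := by
    have hAh : A *ᵥ (xhat - x) = w - (y - A *ᵥ xhat) := by
      rw [hy, mulVec_sub]; abel
    rw [hAh]
    linarith [l2_sub_le w (y - A *ᵥ xhat)]
  rw [le_div_iff₀ hω, mul_comm]
  exact (omega2_mul_linf_le A hcone).trans hres
end

section
/- For any A ∈ ℝ^{m×n} and s ≥ 1: ω₂(A,s)² ≤ s·ω_∞(AᵀA,s), i.e., √s·√(ω_∞(AᵀA,s)) ≥ ω₂(A,s). -/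
open Finset Matrix

/-- ω_∞(Q,s) = inf{ ‖Qz‖_∞/‖z‖_∞ : z ≠ 0, ‖z‖₁ ≤ s‖z‖_∞ }. -/
noncomputable def omegaInf {n : ℕ} (Q : Matrix (Fin n) (Fin n) ℝ) (s : ℝ) : ℝ :=
  sInf {r | ∃ z : Fin n → ℝ, z ≠ 0 ∧ l1 z ≤ s * linf z ∧ r = linf (Q.mulVec z) / linf z}

/-! For `z ≠ 0` with `‖z‖₁ ≤ s ‖z‖_∞`, Hölder gives
`‖Az‖₂² = zᵀAᵀAz ≤ ‖z‖₁ ‖AᵀAz‖_∞ ≤ s ‖z‖_∞ ‖AᵀAz‖_∞`. Dividing by `‖z‖_∞²` bounds the squared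
ratio defining `ω₂` by `s` times the ratio defining `ω_∞`, pointwise on the common constraint set;
since squaring is monotone on `[0, ∞)`, the bound passes to the infima. -/

lemma sq_sInf_image_le_mul_sInf_image {α : Type*} {S : Set α} {f g : α → ℝ} {c : ℝ}
    (hc : 0 < c) (hf : ∀ x ∈ S, 0 ≤ f x) (hfg : ∀ x ∈ S, f x ^ 2 ≤ c * g x) :
    sInf (f '' S) ^ 2 ≤ c * sInf (g '' S) := by
  rcases S.eq_empty_or_nonempty with rfl | hS
  · simp
  have hf_inf : 0 ≤ sInf (f '' S) := Real.sInf_nonneg (by simpa using hf)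
  rw [← div_le_iff₀' hc]
  refine le_csInf (hS.image g) ?_
  rintro _ ⟨x, hx, rfl⟩
  have hle : sInf (f '' S) ≤ f x :=
    csInf_le ⟨0, by simpa [lowerBounds] using hf⟩ (Set.mem_image_of_mem f hx)
  rw [div_le_iff₀' hc]
  exact (pow_le_pow_left₀ hf_inf hle 2).trans (hfg x hx)

section Norms

variable {n : ℕ}

lemma dotProduct_le_l1_mul_linf (x y : Fin n → ℝ) : x ⬝ᵥ y ≤ l1 x * linf y :=
  calc x ⬝ᵥ y ≤ ∑ i, |x i| * |y i| := by
        simpa only [dotProduct, abs_mul] using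
          (le_abs_self (x ⬝ᵥ y)).trans (abs_sum_le_sum_abs (fun i => x i * y i) univ)
    _ ≤ ∑ i, |x i| * linf y :=
        sum_le_sum fun i _ => mul_le_mul_of_nonneg_left (abs_le_linf y i) (abs_nonneg _)
    _ = l1 x * linf y := by rw [l1, sum_mul]

lemma l2_mulVec_sq {m : ℕ} (A : Matrix (Fin m) (Fin n) ℝ) (z : Fin n → ℝ) :
    l2 (A *ᵥ z) ^ 2 = z ⬝ᵥ (Aᵀ * A) *ᵥ z := by
  rw [l2, Real.sq_sqrt (sum_nonneg fun _ _ => sq_nonneg _), ← mulVec_mulVec,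
    dotProduct_mulVec, vecMul_transpose]
  simp only [dotProduct, sq]

end Norms

def sparseCone (n : ℕ) (s : ℝ) : Set (Fin n → ℝ) := {z | z ≠ 0 ∧ l1 z ≤ s * linf z}

lemma omega2_eq_sInf_image {m n : ℕ} (A : Matrix (Fin m) (Fin n) ℝ) (s : ℝ) :
    omega2 A s = sInf ((fun z => l2 (A *ᵥ z) / linf z) '' sparseCone n s) := by
  simp only [omega2, sparseCone, Set.image, Set.mem_ofPred_eq, and_assoc, eq_comm]

lemma omegaInf_eq_sInf_image {n : ℕ} (Q : Matrix (Fin n) (Fin n) ℝ) (s : ℝ) :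
    omegaInf Q s = sInf ((fun z => linf (Q *ᵥ z) / linf z) '' sparseCone n s) := by
  simp only [omegaInf, sparseCone, Set.image, Set.mem_ofPred_eq, and_assoc, eq_comm]

lemma ratio_sq_le_of_mem_sparseCone {m n : ℕ} (A : Matrix (Fin m) (Fin n) ℝ) {s : ℝ}
    {z : Fin n → ℝ} (hz : z ∈ sparseCone n s) :
    (l2 (A *ᵥ z) / linf z) ^ 2 ≤ s * (linf ((Aᵀ * A) *ᵥ z) / linf z) := by
  obtain ⟨hz0, hl1⟩ := hz
  have ht := linf_pos hz0
  set w := (Aᵀ * A) *ᵥ z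
  rw [div_pow, div_le_iff₀ (by positivity)]
  calc l2 (A *ᵥ z) ^ 2 = z ⬝ᵥ w := l2_mulVec_sq A z
    _ ≤ l1 z * linf w := dotProduct_le_l1_mul_linf z w
    _ ≤ s * linf z * linf w := mul_le_mul_of_nonneg_right hl1 (linf_nonneg w)
    _ = s * (linf w / linf z) * linf z ^ 2 := by field_simp

theorem stmt12 {m n : ℕ} (A : Matrix (Fin m) (Fin n) ℝ) (s : ℝ) (hs : 1 ≤ s) :
    (omega2 A s) ^ 2 ≤ s * omegaInf (Aᵀ * A) s ∧
    Real.sqrt s * Real.sqrt (omegaInf (Aᵀ * A) s) ≥ omega2 A s := by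
  have hs0 : 0 < s := one_pos.trans_le hs
  have hsq : omega2 A s ^ 2 ≤ s * omegaInf (Aᵀ * A) s := by
    rw [omega2_eq_sInf_image, omegaInf_eq_sInf_image]
    exact sq_sInf_image_le_mul_sInf_image hs0
      (fun z _ => div_nonneg (Real.sqrt_nonneg _) (linf_nonneg z))
      (fun z hz => ratio_sq_le_of_mem_sparseCone A hz)
  refine ⟨hsq, ?_⟩
  rw [ge_iff_le, ← Real.sqrt_mul hs0.le]
  exact Real.le_sqrt_of_sq_le hsq
end

section
/- Suppose for every nonzero z ∈ Ker(A) one has ‖z‖_{k,1} < (1/2)‖z‖₁. Then every k-sparse x is the unique minimizer of ‖z‖₁ subject to Az = Ax. -/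
open Finset Matrix

/-- ‖x‖_{k,1}: the sum of the k largest absolute values of components of x. -/
noncomputable def kNorm {n : ℕ} (x : Fin n → ℝ) (k : ℕ) : ℝ :=
  ⨆ S : {S : Finset (Fin n) // S.card ≤ k}, ∑ i ∈ S.1, |x i|

/-!
If `x` is supported on `S` with `#S ≤ k` and `Az = Ax`, then `v = z - x` lies in the kernel, and
`‖z‖₁ = ‖x + v‖₁ ≥ ‖x‖₁ - ∑_{S} |vᵢ| + ∑_{Sᶜ} |vᵢ|`. The null space property gives
`∑_{S} |vᵢ| ≤ ‖v‖_{k,1} < ‖v‖₁ / 2`, i.e. the mass of `v` on `S` is strictly smaller than off `S`,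
so `‖z‖₁ > ‖x‖₁` whenever `v ≠ 0`.
-/

section

variable {n : ℕ}

lemma l1_eq_sum_add_sum_compl (v : Fin n → ℝ) (S : Finset (Fin n)) :
    l1 v = ∑ i ∈ S, |v i| + ∑ i ∈ Sᶜ, |v i| :=
  (sum_add_sum_compl S _).symm

lemma sum_abs_le_kNorm (v : Fin n → ℝ) {k : ℕ} {S : Finset (Fin n)} (hS : S.card ≤ k) :
    ∑ i ∈ S, |v i| ≤ kNorm v k :=
  le_ciSup (f := fun T : {T : Finset (Fin n) // T.card ≤ k} => ∑ i ∈ T.1, |v i|)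
    (Set.finite_range _).bddAbove ⟨S, hS⟩

lemma sum_abs_lt_sum_abs_compl_of_kNorm_lt {v : Fin n → ℝ} {k : ℕ} {S : Finset (Fin n)}
    (hS : S.card ≤ k) (hv : kNorm v k < 1 / 2 * l1 v) :
    ∑ i ∈ S, |v i| < ∑ i ∈ Sᶜ, |v i| := by
  have := sum_abs_le_kNorm v hS
  rw [l1_eq_sum_add_sum_compl v S] at hv
  linarith

lemma l1_sub_add_le_l1_add {x : Fin n → ℝ} {S : Finset (Fin n)} (hx : ∀ i ∉ S, x i = 0)
    (v : Fin n → ℝ) :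
    l1 x - ∑ i ∈ S, |v i| + ∑ i ∈ Sᶜ, |v i| ≤ l1 (x + v) := by
  have hxS : l1 x = ∑ i ∈ S, |x i| := by
    have hSc : ∑ i ∈ Sᶜ, |x i| = 0 :=
      sum_eq_zero fun i hi => by rw [hx i (mem_compl.1 hi), abs_zero]
    rw [l1_eq_sum_add_sum_compl x S, hSc, add_zero]
  have hxvS : ∑ i ∈ S, (|x i| - |v i|) ≤ ∑ i ∈ S, |(x + v) i| :=
    sum_le_sum fun i _ => by simpa using abs_sub_abs_le_abs_add (x i) (v i)
  have hxvSc : ∑ i ∈ Sᶜ, |(x + v) i| = ∑ i ∈ Sᶜ, |v i| :=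
    sum_congr rfl fun i hi => by rw [Pi.add_apply, hx i (mem_compl.1 hi), zero_add]
  rw [l1_eq_sum_add_sum_compl (x + v) S, hxvSc, hxS, ← sum_sub_distrib]
  linarith

end

theorem stmt15 {m n : ℕ} (A : Matrix (Fin m) (Fin n) ℝ) (k : ℕ)
    (hNSP : ∀ z : Fin n → ℝ, z ≠ 0 → A.mulVec z = 0 → kNorm z k < (1 / 2) * l1 z)
    (x : Fin n → ℝ) (hx : (Finset.univ.filter fun i => x i ≠ 0).card ≤ k) :
    ∀ z : Fin n → ℝ, A.mulVec z = A.mulVec x → z ≠ x → l1 x < l1 z := by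
  intro z hAz hne
  set S := univ.filter fun i => x i ≠ 0
  have hxS : ∀ i ∉ S, x i = 0 := fun i hi => by simpa [S] using hi
  have hker : A.mulVec (z - x) = 0 := by rw [mulVec_sub, hAz, sub_self]
  have hoff := sum_abs_lt_sum_abs_compl_of_kNorm_lt hx (hNSP _ (sub_ne_zero.2 hne) hker)
  have hgain := l1_sub_add_le_l1_add hxS (z - x)
  rw [add_sub_cancel] at hgain
  linarith
end

section
/- With f_s as above and assuming 1 < s < s* = inf{‖z‖₁/‖z‖_∞ : Qz = 0, z ≠ 0}, if η* > 0 is a fixed point of f_s (f_s(η*) = η*), then η* = 1/ω_◇(Q,s), where ω_◇(Q,s) = inf{ ‖Qz‖_◇/‖z‖_∞ : z ≠ 0, ‖z‖₁ ≤ s‖z‖_∞ }. -/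
/-!
Put `p z = ‖Qz‖_◇`, a seminorm on `ℝⁿ`. Adding `t ≥ 0` to an entry of largest modulus of `z`,
with that entry's sign, raises both `‖z‖₁` and `‖z‖_∞` by `t` and `p z` by at most `C t`.

If `η = f_s(η)`, homogeneity gives `‖w‖_∞ ≤ max (η p w) (‖w‖₁ / s)` for every `w`. For `z` in the
cone `‖z‖₁ ≤ s ‖z‖_∞`, a bump by `t > 0` lands strictly inside the cone (as `s > 1`), so
`‖z‖_∞ + t ≤ η (p z + C t)`; letting `t → 0` gives `‖z‖_∞ ≤ η p z`, i.e. `ω ≥ 1/η`.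
Conversely, a feasible `w` with `‖w‖_∞ = x ≤ η` enters the cone after a bump of size
`s (η - x) / (s - 1)`, so `ω x ≤ 1 + K (η - x)`; taking the supremum over `x` gives `ω η ≤ 1`.
-/

open Finset Matrix

/-- f_s(η) = max{ ‖z‖_∞ : ‖Qz‖_◇ ≤ 1, ‖z‖₁ ≤ sη }, where ‖·‖_◇ is the norm N on ℝᵐ. -/
noncomputable def fs {m n : ℕ} (N : (Fin m → ℝ) → ℝ)
    (Q : Matrix (Fin m) (Fin n) ℝ) (s : ℝ) (η : ℝ) : ℝ :=
  sSup {r | ∃ z : Fin n → ℝ, N (Q.mulVec z) ≤ 1 ∧ l1 z ≤ s * η ∧ r = linf z}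

/-- ω_◇(Q,s) = inf{ ‖Qz‖_◇/‖z‖_∞ : z ≠ 0, ‖z‖₁ ≤ s‖z‖_∞ }. -/
noncomputable def omegaN {m n : ℕ} (N : (Fin m → ℝ) → ℝ)
    (Q : Matrix (Fin m) (Fin n) ℝ) (s : ℝ) : ℝ :=
  sInf {r | ∃ z : Fin n → ℝ, z ≠ 0 ∧ l1 z ≤ s * linf z ∧ r = N (Q.mulVec z) / linf z}

section Norms

variable {n : ℕ}

theorem linf_eq_norm (z : Fin n → ℝ) : linf z = ‖z‖ :=
  le_antisymm (Real.iSup_le (fun i => norm_le_pi_norm z i) (norm_nonneg z))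
    ((pi_norm_le_iff_of_nonneg (Real.iSup_nonneg fun i => abs_nonneg (z i))).2 fun i =>
      le_ciSup (f := fun i => |z i|) (Finite.bddAbove_range _) i)

theorem norm_le_l1 (z : Fin n → ℝ) : ‖z‖ ≤ l1 z :=
  (pi_norm_le_iff_of_nonneg (sum_nonneg fun i _ => abs_nonneg (z i))).2 fun i =>
    single_le_sum (f := fun i => |z i|) (fun j _ => abs_nonneg (z j)) (mem_univ i)

theorem l1_smul (c : ℝ) (z : Fin n → ℝ) : l1 (c • z) = |c| * l1 z := by
  simp [l1, abs_mul, mul_sum]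

theorem exists_l1_norm_add_single [Nonempty (Fin n)] (z : Fin n → ℝ) {t : ℝ} (ht : 0 ≤ t) :
    ∃ i b, |b| = t ∧ l1 (z + Pi.single i b) = l1 z + t ∧ ‖z + Pi.single i b‖ = ‖z‖ + t := by
  obtain ⟨i, hi⟩ := Finite.exists_max fun j => |z j|
  have hzi : |z i| = ‖z‖ :=
    le_antisymm (norm_le_pi_norm z i) ((pi_norm_le_iff_of_nonneg (abs_nonneg _)).2 hi)
  set b := if 0 ≤ z i then t else -t
  have hb : |b| = t := by unfold b; split_ifs <;> simp [abs_of_nonneg ht]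
  set e : Fin n → ℝ := Pi.single i b
  have hei : e i = b := by simp [e]
  have hadd : ∀ j, |z j + e j| = |z j| + |e j| := by
    intro j
    rcases eq_or_ne j i with rfl | hj
    · rw [hei, abs_add_eq_add_abs_iff]
      unfold b; split_ifs with h
      · exact Or.inl ⟨h, ht⟩
      · exact Or.inr ⟨(not_le.1 h).le, neg_nonpos.2 ht⟩
    · simp [e, hj]
  refine ⟨i, b, hb, ?_, le_antisymm ?_ ?_⟩
  · have hsum : ∑ j, |e j| = t := by simp [e, Pi.single_apply, apply_ite, hb]
    change l1 (z + e) = l1 z + t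
    simp only [l1, Pi.add_apply, hadd, sum_add_distrib, hsum]
  · simpa [e, Pi.norm_single, hb] using norm_add_le z e
  · calc ‖z‖ + t = |z i + e i| := by rw [hadd, hzi, hei, hb]
      _ ≤ ‖z + e‖ := norm_le_pi_norm (z + e) i

end Norms

section Goodness

variable {n : ℕ} (p : Seminorm ℝ (Fin n → ℝ))

theorem exists_bump [Nonempty (Fin n)] :
    ∃ C > 0, ∀ (z : Fin n → ℝ) (t : ℝ), 0 ≤ t →
      ∃ z', l1 z' = l1 z + t ∧ ‖z'‖ = ‖z‖ + t ∧ p z' ≤ p z + C * t := by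
  refine ⟨∑ j, p (Pi.single j 1) + 1,
    add_pos_of_nonneg_of_pos (sum_nonneg fun j _ => apply_nonneg p _) one_pos, fun z t ht => ?_⟩
  obtain ⟨i, b, hb, hl1, hnorm⟩ := exists_l1_norm_add_single z ht
  refine ⟨_, hl1, hnorm, ?_⟩
  have hcol : p (Pi.single i 1) ≤ ∑ j, p (Pi.single j 1) + 1 :=
    (single_le_sum (f := fun j => p (Pi.single j 1)) (fun j _ => apply_nonneg p _)
      (mem_univ i)).trans (le_add_of_nonneg_right zero_le_one)
  calc p (z + (Pi.single i b : Fin n → ℝ)) ≤ p z + p (Pi.single i b) := map_add_le_add p _ _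
    _ = p z + t * p (Pi.single i 1) := by
        rw [← mul_one b, ← smul_eq_mul, Pi.single_smul', map_smul_eq_mul, Real.norm_eq_abs, hb]
    _ ≤ p z + (∑ j, p (Pi.single j 1) + 1) * t := by rw [mul_comm t]; gcongr

-- With `p z = N (Q *ᵥ z)`, `fs N Q s η = sSup (feasibleNorms p s η)` and
-- `omegaN N Q s = sInf (goodnessRatios p s)` hold definitionally.
def feasibleNorms (s η : ℝ) : Set ℝ :=
  {r | ∃ z : Fin n → ℝ, p z ≤ 1 ∧ l1 z ≤ s * η ∧ r = linf z}

def goodnessRatios (s : ℝ) : Set ℝ :=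
  {r | ∃ z : Fin n → ℝ, z ≠ 0 ∧ l1 z ≤ s * linf z ∧ r = p z / linf z}

theorem isLUB_feasibleNorms {s η : ℝ} (hs : 0 ≤ s) (hη : 0 < η)
    (h : sSup (feasibleNorms p s η) = η) : IsLUB (feasibleNorms p s η) η := by
  have hzero : 0 ∈ feasibleNorms p s η :=
    ⟨0, by simp, by simpa [l1] using mul_nonneg hs hη.le, by simp [linf_eq_norm]⟩
  have hbdd : BddAbove (feasibleNorms p s η) := by
    by_contra hb
    rw [Real.sSup_of_not_bddAbove hb] at h
    exact hη.ne h
  have hlub := isLUB_csSup ⟨0, hzero⟩ hbdd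
  rwa [h] at hlub

theorem norm_le_max_of_mem_upperBounds {s η : ℝ} (hs : 0 < s) (hη : 0 < η)
    (h : η ∈ upperBounds (feasibleNorms p s η)) (w : Fin n → ℝ) :
    ‖w‖ ≤ max (η * p w) (l1 w / s) := by
  set M := max (η * p w) (l1 w / s)
  have hpM : η * p w ≤ M := le_max_left _ _
  have hl1M : l1 w / s ≤ M := le_max_right _ _
  rcases (hpM.trans' (by positivity)).eq_or_lt with hM | hM
  · rw [← hM, div_le_iff₀ hs, zero_mul] at hl1M
    exact (norm_le_l1 w).trans (hM ▸ hl1M)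
  · have hscaled := h ⟨(η / M) • w, ?_, ?_, rfl⟩
    · rw [linf_eq_norm, norm_smul, Real.norm_of_nonneg (by positivity), div_mul_comm] at hscaled
      exact (div_le_one₀ hM).1 ((mul_le_iff_le_one_left hη).1 hscaled)
    · rw [map_smul_eq_mul, Real.norm_of_nonneg (by positivity), div_mul_eq_mul_div]
      exact div_le_one_of_le₀ hpM hM.le
    · rw [l1_smul, abs_of_nonneg (by positivity)]
      calc η / M * l1 w ≤ η / M * (s * M) := by gcongr; exact (div_le_iff₀' hs).1 hl1M
        _ = s * η := by field_simp

theorem norm_le_mul_of_mem_upperBounds [Nonempty (Fin n)] {s η : ℝ} (hs : 1 < s) (hη : 0 < η)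
    (h : η ∈ upperBounds (feasibleNorms p s η)) {z : Fin n → ℝ} (hz : l1 z ≤ s * ‖z‖) :
    ‖z‖ ≤ η * p z := by
  obtain ⟨C, hC, hbump⟩ := exists_bump p
  refine le_of_forall_pos_le_add fun ε hε => ?_
  set t := ε / (η * C)
  have ht : 0 < t := by positivity
  obtain ⟨z', hl1, hnorm, hp⟩ := hbump z t ht.le
  -- the bump lowers the ratio `l1 / ‖·‖`, so only the first term of the maximum can bound `‖z'‖`
  have hl1' : l1 z' / s < ‖z'‖ := by
    rw [div_lt_iff₀ (by linarith), hl1, hnorm]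
    linarith [lt_mul_of_one_lt_left ht hs]
  have hz' : ‖z'‖ ≤ η * p z' :=
    (le_max_iff.1 (norm_le_max_of_mem_upperBounds p (by linarith) hη h z')).resolve_right
      hl1'.not_ge
  have hεt : η * (C * t) = ε := by simp only [t]; field_simp
  rw [hnorm] at hz'
  linarith [mul_le_mul_of_nonneg_left hp hη.le]

theorem goodnessRatios_nonempty [Nonempty (Fin n)] {s : ℝ} (hs : 1 ≤ s) :
    (goodnessRatios p s).Nonempty := by
  obtain ⟨i⟩ := ‹Nonempty (Fin n)›
  refine ⟨_, Pi.single i 1, by simp, ?_, rfl⟩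
  simpa [l1, linf_eq_norm, Pi.norm_single, Pi.single_apply, apply_ite] using hs

theorem nonneg_of_mem_goodnessRatios {s r : ℝ} (hr : r ∈ goodnessRatios p s) : 0 ≤ r := by
  obtain ⟨z, -, -, rfl⟩ := hr
  exact div_nonneg (apply_nonneg p z) (linf_eq_norm z ▸ norm_nonneg z)

theorem inv_le_sInf_goodnessRatios [Nonempty (Fin n)] {s η : ℝ} (hs : 1 < s) (hη : 0 < η)
    (h : η ∈ upperBounds (feasibleNorms p s η)) : η⁻¹ ≤ sInf (goodnessRatios p s) := by
  refine le_csInf (goodnessRatios_nonempty p hs.le) ?_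
  rintro _ ⟨z, hz, hl1, rfl⟩
  rw [linf_eq_norm] at hl1 ⊢
  rw [inv_eq_one_div, div_le_div_iff₀ hη (norm_pos_iff.2 hz), one_mul, mul_comm]
  exact norm_le_mul_of_mem_upperBounds p hs hη h hl1

theorem sInf_goodnessRatios_mul_norm_le {s : ℝ} {z : Fin n → ℝ} (hz : l1 z ≤ s * ‖z‖) :
    sInf (goodnessRatios p s) * ‖z‖ ≤ p z := by
  rcases eq_or_ne z 0 with rfl | hz0
  · simp
  · have hle := csInf_le ⟨0, fun _ => nonneg_of_mem_goodnessRatios p⟩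
      ⟨z, hz0, linf_eq_norm z ▸ hz, rfl⟩
    rwa [linf_eq_norm, le_div_iff₀ (norm_pos_iff.2 hz0)] at hle

theorem exists_sInf_goodnessRatios_mul_norm_le_add [Nonempty (Fin n)] (s : ℝ) :
    ∃ C > 0, ∀ (w : Fin n → ℝ) (t : ℝ), 0 ≤ t → l1 w - s * ‖w‖ ≤ (s - 1) * t →
      sInf (goodnessRatios p s) * ‖w‖ ≤ p w + C * t := by
  obtain ⟨C, hC, hbump⟩ := exists_bump p
  refine ⟨C, hC, fun w t ht hwt => ?_⟩
  obtain ⟨w', hl1, hnorm, hp⟩ := hbump w t ht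
  have hω : 0 ≤ sInf (goodnessRatios p s) :=
    Real.sInf_nonneg fun _ => nonneg_of_mem_goodnessRatios p
  calc sInf (goodnessRatios p s) * ‖w‖ ≤ sInf (goodnessRatios p s) * ‖w'‖ := by
        gcongr; linarith
    _ ≤ p w' := sInf_goodnessRatios_mul_norm_le p (by rw [hl1, hnorm]; linarith)
    _ ≤ p w + C * t := hp

theorem sInf_goodnessRatios_le_inv [Nonempty (Fin n)] {s η : ℝ} (hs : 1 < s) (hη : 0 < η)
    (h : IsLUB (feasibleNorms p s η) η) : sInf (goodnessRatios p s) ≤ η⁻¹ := by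
  obtain ⟨C, hC, hbound⟩ := exists_sInf_goodnessRatios_mul_norm_le_add p s
  set ω := sInf (goodnessRatios p s)
  have hω : 0 ≤ ω := Real.sInf_nonneg fun _ => nonneg_of_mem_goodnessRatios p
  set K := C * s / (s - 1)
  have hK : 0 < K := div_pos (by positivity) (by linarith)
  -- a feasible `w` is bumped by `t = s (η - ‖w‖) / (s - 1)` into the cone `l1 ≤ s ‖·‖`
  have hfeas : ∀ x ∈ feasibleNorms p s η, x ≤ (1 + K * η) / (ω + K) := by
    rintro _ ⟨w, hpw, hl1w, rfl⟩
    have hx : ‖w‖ ≤ η := linf_eq_norm w ▸ h.1 ⟨w, hpw, hl1w, rfl⟩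
    have hw := hbound w (s * (η - ‖w‖) / (s - 1))
      (div_nonneg (mul_nonneg (by linarith) (by linarith)) (by linarith))
      (by rw [mul_div_cancel₀ _ (by linarith)]; linarith)
    have hKt : C * (s * (η - ‖w‖) / (s - 1)) = K * (η - ‖w‖) := by ring
    rw [linf_eq_norm, le_div_iff₀ (by linarith)]
    linarith
  have hsup := (le_div_iff₀ (by linarith)).1 (h.2 hfeas)
  rw [← one_div, le_div_iff₀ hη]
  linarith

end Goodness

theorem stmt18_general {m n : ℕ}
    (N : (Fin m → ℝ) → ℝ)
    (hN_add : ∀ u v, N (u + v) ≤ N u + N v)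
    (hN_smul : ∀ (c : ℝ) (v : Fin m → ℝ), N (c • v) = |c| * N v)
    (Q : Matrix (Fin m) (Fin n) ℝ) (s : ℝ) (hs : 1 < s)
    (ηstar : ℝ) (hpos : 0 < ηstar) (hfix : fs N Q s ηstar = ηstar) :
    ηstar = 1 / omegaN N Q s := by
  set p : Seminorm ℝ (Fin n → ℝ) :=
    (Seminorm.of N hN_add fun c v => (hN_smul c v).trans (by rw [Real.norm_eq_abs])).comp
      Q.mulVecLin
  have hlub : IsLUB (feasibleNorms p s ηstar) ηstar :=
    isLUB_feasibleNorms p (by linarith) hpos hfix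
  obtain ⟨_, ⟨z, -, -, rfl⟩, hz, -⟩ := hlub.exists_between hpos
  rw [linf_eq_norm, norm_pos_iff] at hz
  obtain ⟨i, -⟩ := Function.ne_iff.1 hz
  have : Nonempty (Fin n) := ⟨i⟩
  have hω : omegaN N Q s = ηstar⁻¹ :=
    le_antisymm (sInf_goodnessRatios_le_inv p hs hpos hlub)
      (inv_le_sInf_goodnessRatios p hs hpos hlub.1)
  rw [hω, one_div, inv_inv]

theorem stmt18 {m n : ℕ}
    (N : (Fin m → ℝ) → ℝ)
    (hN_add : ∀ u v, N (u + v) ≤ N u + N v)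
    (hN_smul : ∀ (c : ℝ) (v : Fin m → ℝ), N (c • v) = |c| * N v)
    (hN_def : ∀ v, N v = 0 → v = 0)
    (Q : Matrix (Fin m) (Fin n) ℝ) (s : ℝ) (hs : 1 < s)
    (hss : ENNReal.ofReal s <
      ⨅ z : {z : Fin n → ℝ // Q.mulVec z = 0 ∧ z ≠ 0},
        ENNReal.ofReal (l1 z.1 / linf z.1))
    (ηstar : ℝ) (hpos : 0 < ηstar) (hfix : fs N Q s ηstar = ηstar) :
    ηstar = 1 / omegaN N Q s :=
  stmt18_general N hN_add hN_smul Q s hs ηstar hpos hfix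
end
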